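/- arXiv:0905.4067 — 3 statements merged into one kernel-verified Lean document; each statement's English description precedes it below -/
import Mathlib

section
/- Let X be a Hilbert C*-module over a C*-algebra A, y₁,…,yₙ ∈ X and a₁,…,aₙ ∈ A. Then the self-adjoint element ∑_{i≠j} aᵢ*⟨yᵢ,yⱼ⟩aⱼ satisfies (∑_{i≠j} aᵢ*⟨yᵢ,yⱼ⟩aⱼ)² ≤ (n−1) · (∑ᵢ ‖aᵢ‖²) · (max_{1≤i≤n} ∑_{j≠i} ‖⟨yᵢ,yⱼ⟩‖²) · ∑ᵢ aᵢ*aᵢ, as an inequality in the order of A. -/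
open scoped RightActions

/-- The December-2024 Mathlib `CStarModule`: a right Hilbert `A`-module (action `SMul Aᵐᵒᵖ E`),
with inner product `A`-linear on the right: `⟪x, y <• a⟫ = ⟪x, y⟫ * a`. -/
class CStarModuleRight (A E : Type*) [NonUnitalSemiring A] [StarRing A]
    [Module ℂ A] [AddCommGroup E] [Module ℂ E] [PartialOrder A] [SMul Aᵐᵒᵖ E] [Norm A] [Norm E]
    extends Inner A E where
  inner_add_right {x} {y} {z} : inner x (y + z) = inner x y + inner x z
  inner_self_nonneg {x} : 0 ≤ inner x x
  inner_self {x} : inner x x = 0 ↔ x = 0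
  inner_op_smul_right {a : A} {x y : E} : inner x (y <• a) = inner x y * a
  inner_smul_right_complex {z : ℂ} {x} {y} : inner x (z • y) = z • inner x y
  star_inner x y : star (inner x y) = inner y x
  norm_eq_sqrt_norm_inner_self x : ‖x‖ = √‖inner x x‖

/-!
Writing `S = ∑ᵢ ∑_{j≠i} aᵢ* ⟨yᵢ, yⱼ⟩ aⱼ = ∑ⱼ cⱼ aⱼ` with `cⱼ = ∑_{i≠j} aᵢ* ⟨yᵢ, yⱼ⟩`, the element `S`
is self-adjoint, so `S² = S* S`. The Cauchy–Schwarz inequality of the standard Hilbert module `Aⁿ`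
bounds `S* S` by `(∑ⱼ ‖cⱼ‖²) ∑ⱼ aⱼ* aⱼ`, and the scalar Cauchy–Schwarz inequality gives
`‖cⱼ‖² ≤ (∑_{i≠j} ‖aᵢ‖²) · maxᵢ ∑_{j≠i} ‖⟨yᵢ, yⱼ⟩‖²`; each `‖aᵢ‖²` occurs in `n - 1` of these sums.
-/

open Finset
open scoped InnerProductSpace

theorem Finset.sum_sum_erase_comm {ι β : Type*} [Fintype ι] [DecidableEq ι] [AddCommMonoid β]
    (f : ι → ι → β) : ∑ i, ∑ j ∈ univ.erase i, f i j = ∑ j, ∑ i ∈ univ.erase j, f i j :=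
  sum_comm' (by simp [ne_comm])

theorem Finset.sum_sum_erase_const {ι : Type*} [Fintype ι] [DecidableEq ι] (f : ι → ℝ) :
    ∑ j, ∑ i ∈ univ.erase j, f i = (Fintype.card ι - 1) * ∑ i, f i := by
  simp only [sum_erase_eq_sub (mem_univ _), sum_sub_distrib, sum_const, card_univ, nsmul_eq_mul]
  ring

theorem norm_sum_star_mul_sq_le {ι R : Type*} [NonUnitalSeminormedRing R] [StarRing R]
    [NormedStarGroup R] (s : Finset ι) (a k : ι → R) :
    ‖∑ i ∈ s, star (a i) * k i‖ ^ 2 ≤ (∑ i ∈ s, ‖a i‖ ^ 2) * ∑ i ∈ s, ‖k i‖ ^ 2 := by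
  have h : ‖∑ i ∈ s, star (a i) * k i‖ ≤ ∑ i ∈ s, ‖a i‖ * ‖k i‖ :=
    (norm_sum_le _ _).trans <| sum_le_sum fun i _ => (norm_mul_le _ _).trans_eq (by rw [norm_star])
  calc ‖∑ i ∈ s, star (a i) * k i‖ ^ 2 ≤ (∑ i ∈ s, ‖a i‖ * ‖k i‖) ^ 2 :=
        pow_le_pow_left₀ (norm_nonneg _) h 2
    _ ≤ (∑ i ∈ s, ‖a i‖ ^ 2) * ∑ i ∈ s, ‖k i‖ ^ 2 := sum_mul_sq_le_sq_mul_sq s _ _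

section CStarAlgebra

variable {A ι : Type*} [NonUnitalCStarAlgebra A] [PartialOrder A] [StarOrderedRing A] [Fintype ι]

open WithCStarModule CStarModule in
/-- Cauchy–Schwarz in the standard Hilbert module `C⋆ᵐᵒᵈ(A, ι → A)`, whose inner product is
`⟪x, z⟫ = ∑ⱼ zⱼ xⱼ*`, applied to `x = c` and `z = a*`. -/
theorem star_sum_mul_mul_sum_mul_le (c a : ι → A) :
    star (∑ j, c j * a j) * ∑ j, c j * a j ≤ (∑ j, ‖c j‖ ^ 2) • ∑ j, star (a j) * a j := by
  let x : C⋆ᵐᵒᵈ(A, ι → A) := (equiv _ _).symm c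
  let z : C⋆ᵐᵒᵈ(A, ι → A) := (equiv _ _).symm (star a)
  have hzx : ⟪z, x⟫_A = ∑ j, c j * a j := by simp [pi_inner, inner_def, x, z]
  have hzz : ⟪z, z⟫_A = ∑ j, star (a j) * a j := by simp [pi_inner, inner_def, z]
  have hx : ‖x‖ ^ 2 ≤ ∑ j, ‖c j‖ ^ 2 := by
    rw [pi_norm_sq]
    exact (norm_sum_le _ _).trans_eq (sum_congr rfl fun j _ => (norm_sq_eq A (x := x j)).symm)
  calc star (∑ j, c j * a j) * ∑ j, c j * a j = ⟪x, z⟫_A * ⟪z, x⟫_A := by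
        rw [← hzx, star_inner]
    _ ≤ ‖x‖ ^ 2 • ⟪z, z⟫_A := inner_mul_inner_swap_le
    _ ≤ (∑ j, ‖c j‖ ^ 2) • ∑ j, star (a j) * a j := by
        rw [hzz]
        exact smul_le_smul_of_nonneg_right hx (sum_nonneg fun j _ => star_mul_self_nonneg _)

variable [DecidableEq ι]

theorem sum_sum_erase_star_mul_mul_self_le (K : ι → ι → A) (hK : ∀ i j, star (K i j) = K j i)
    (a : ι → A) {M : ℝ} (hM : ∀ i, ∑ j ∈ univ.erase i, ‖K i j‖ ^ 2 ≤ M) :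
    (∑ i, ∑ j ∈ univ.erase i, star (a i) * K i j * a j) *
        (∑ i, ∑ j ∈ univ.erase i, star (a i) * K i j * a j) ≤
      (((Fintype.card ι : ℝ) - 1) * (∑ i, ‖a i‖ ^ 2) * M) • ∑ i, star (a i) * a i := by
  set S := ∑ i, ∑ j ∈ univ.erase i, star (a i) * K i j * a j
  set c : ι → A := fun j => ∑ i ∈ univ.erase j, star (a i) * K i j
  have hS : S = ∑ j, c j * a j := by
    simp only [S, c, sum_mul]
    exact sum_sum_erase_comm _
  have hS_star : star S = S := by
    simp only [S, star_sum, star_mul, star_star, hK, mul_assoc]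
    exact sum_sum_erase_comm _
  have hc : ∀ j, ‖c j‖ ^ 2 ≤ (∑ i ∈ univ.erase j, ‖a i‖ ^ 2) * M := fun j =>
    (norm_sum_star_mul_sq_le _ _ _).trans <| mul_le_mul_of_nonneg_left
      (by simpa only [← hK j, norm_star] using hM j) (sum_nonneg fun i _ => by positivity)
  have hc_sum : ∑ j, ‖c j‖ ^ 2 ≤ ((Fintype.card ι : ℝ) - 1) * (∑ i, ‖a i‖ ^ 2) * M := by
    rw [← sum_sum_erase_const, sum_mul]
    exact sum_le_sum fun j _ => hc j
  calc S * S = star (∑ j, c j * a j) * ∑ j, c j * a j := by rw [← hS, hS_star]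
    _ ≤ (∑ j, ‖c j‖ ^ 2) • ∑ j, star (a j) * a j := star_sum_mul_mul_sum_mul_le c a
    _ ≤ (((Fintype.card ι : ℝ) - 1) * (∑ i, ‖a i‖ ^ 2) * M) • ∑ i, star (a i) * a i :=
        smul_le_smul_of_nonneg_right hc_sum (sum_nonneg fun j _ => star_mul_self_nonneg _)

end CStarAlgebra

theorem stmt_12 {A E : Type*} [NonUnitalCStarAlgebra A] [PartialOrder A] [StarOrderedRing A]
    [AddCommGroup E] [Module ℂ E] [SMul Aᵐᵒᵖ E] [Norm E] [CStarModuleRight A E]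
    {n : ℕ} (hn : 0 < n) (y : Fin n → E) (a : Fin n → A) :
    (∑ i, ∑ j, if i = j then 0 else star (a i) * (inner A (y i) (y j) : A) * a j) *
        (∑ i, ∑ j, if i = j then 0 else star (a i) * (inner A (y i) (y j) : A) * a j) ≤
      (((n : ℝ) - 1) * (∑ i, ‖a i‖ ^ 2) *
        (Finset.univ.sup' ⟨⟨0, hn⟩, Finset.mem_univ _⟩
          fun i => ∑ j, if j = i then 0 else ‖(inner A (y i) (y j) : A)‖ ^ 2)) •
        ∑ i, star (a i) * a i := by
  simp only [sum_ite, sum_const_zero, zero_add, filter_ne, filter_ne']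
  have hM (i : Fin n) := le_sup' (fun i => ∑ j ∈ univ.erase i, ‖(inner A (y i) (y j) : A)‖ ^ 2)
    (mem_univ i)
  simpa only [Fintype.card_fin] using sum_sum_erase_star_mul_mul_self_le _
    (fun i j => CStarModuleRight.star_inner (y i) (y j)) a hM
end

section
/- Let X be a Hilbert C*-module over a C*-algebra A with orthogonal vectors y₁,…,yₙ (⟨yᵢ,yⱼ⟩ = 0 for i ≠ j) and x ∈ X. Then (∑ᵢ ⟨yᵢ,x⟩*⟨yᵢ,x⟩)² ≤ (max_{1≤i≤n} ‖yᵢ‖²) · ‖∑ᵢ ⟨yᵢ,x⟩*⟨yᵢ,x⟩‖ · ⟨x,x⟩, as an inequality in the order of A. -/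
open scoped RightActions

namespace CStarModuleRight

section Algebraic

variable {A E : Type*} [NonUnitalRing A] [StarRing A] [Module ℂ A] [PartialOrder A] [Norm A]
  [AddCommGroup E] [Module ℂ E] [SMul Aᵐᵒᵖ E] [Norm E] [CStarModuleRight A E]

theorem inner_add_left {x y z : E} : (inner A (x + y) z : A) = inner A x z + inner A y z := by
  rw [← star_inner, inner_add_right, star_add, star_inner, star_inner]

variable (A) in
def innerRight (x : E) : E →+ A :=
  AddMonoidHom.mk' (fun y => inner A x y) fun _ _ => inner_add_right

variable (A) in
def innerLeft (y : E) : E →+ A :=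
  AddMonoidHom.mk' (fun x => inner A x y) fun _ _ => inner_add_left

theorem inner_zero_left {y : E} : (inner A (0 : E) y : A) = 0 :=
  map_zero (innerLeft A y)

theorem inner_sub_left {x y z : E} : (inner A (x - y) z : A) = inner A x z - inner A y z :=
  map_sub (innerLeft A z) x y

theorem inner_sub_right {x y z : E} : (inner A x (y - z) : A) = inner A x y - inner A x z :=
  map_sub (innerRight A x) y z

theorem inner_sum_left {ι : Type*} (s : Finset ι) (x : ι → E) (y : E) :
    (inner A (∑ i ∈ s, x i) y : A) = ∑ i ∈ s, inner A (x i) y :=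
  map_sum (innerLeft A y) x s

theorem inner_sum_right {ι : Type*} (s : Finset ι) (x : E) (y : ι → E) :
    (inner A x (∑ i ∈ s, y i) : A) = ∑ i ∈ s, inner A x (y i) :=
  map_sum (innerRight A x) y s

theorem inner_op_smul_left {a : A} {x y : E} :
    (inner A (x <• a) y : A) = star a * inner A x y := by
  rw [← star_inner, inner_op_smul_right, star_mul, star_inner]

theorem inner_smul_right_real {r : ℝ} {x y : E} :
    (inner A x (r • y) : A) = r • inner A x y := by
  rw [← Complex.coe_smul, inner_smul_right_complex, Complex.coe_smul]

theorem inner_smul_left_real [StarModule ℂ A] {r : ℝ} {x y : E} :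
    (inner A (r • x) y : A) = r • inner A x y := by
  rw [← star_inner, inner_smul_right_real, star_smul, star_trivial, star_inner]

theorem isSelfAdjoint_inner_self (x : E) : IsSelfAdjoint (inner A x x : A) :=
  star_inner x x

theorem inner_sum_op_smul_self_of_pairwise {ι : Type*} (s : Finset ι) {y : ι → E}
    (horth : Pairwise fun i j => (inner A (y i) (y j) : A) = 0) (a : ι → A) :
    (inner A (∑ i ∈ s, y i <• a i) (∑ i ∈ s, y i <• a i) : A) =
      ∑ i ∈ s, star (a i) * inner A (y i) (y i) * a i := by
  simp only [inner_sum_left, inner_sum_right, inner_op_smul_left, inner_op_smul_right]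
  refine Finset.sum_congr rfl fun j hj => ?_
  rw [Finset.sum_mul, Finset.sum_eq_single_of_mem j hj fun i _ hij => by
    rw [horth hij, mul_zero, zero_mul], mul_assoc]

end Algebraic

section CStarAlgebra

variable {A E : Type*} [NonUnitalCStarAlgebra A] [PartialOrder A]
  [AddCommGroup E] [Module ℂ E] [SMul Aᵐᵒᵖ E] [Norm E] [CStarModuleRight A E]

theorem norm_sq_eq_norm_inner_self (x : E) : ‖x‖ ^ 2 = ‖(inner A x x : A)‖ := by
  rw [norm_eq_sqrt_norm_inner_self (A := A), Real.sq_sqrt (norm_nonneg _)]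

theorem inner_self_op_smul_sub_smul (a : A) (r : ℝ) (x y : E) :
    (inner A (x <• a - r • y) (x <• a - r • y) : A) =
      star a * inner A x x * a - r • (star a * inner A x y) - r • (inner A y x * a) +
        (r * r) • inner A y y := by
  simp only [inner_sub_left, inner_sub_right, inner_op_smul_left, inner_op_smul_right,
    inner_smul_left_real, inner_smul_right_real, smul_mul_assoc, smul_sub, sub_mul, mul_smul,
    mul_assoc]
  abel

variable [StarOrderedRing A]

theorem star_mul_inner_self_mul_le (a : A) (x : E) :
    star a * inner A x x * a ≤ ‖x‖ ^ 2 • (star a * a) := by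
  rw [norm_sq_eq_norm_inner_self (A := A)]
  exact CStarAlgebra.star_left_conjugate_le_norm_smul (isSelfAdjoint_inner_self x)

theorem inner_mul_inner_swap_le (x y : E) :
    (inner A y x : A) * inner A x y ≤ ‖x‖ ^ 2 • (inner A y y : A) := by
  rcases eq_or_ne x 0 with rfl | hx
  · rw [inner_zero_left, mul_zero]
    exact smul_nonneg (sq_nonneg _) inner_self_nonneg
  have hr : 0 < ‖x‖ ^ 2 := by
    rw [norm_sq_eq_norm_inner_self (A := A), norm_pos_iff]
    exact mt inner_self.mp hx
  set r := ‖x‖ ^ 2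
  set a : A := inner A x y
  have ha : (inner A y x : A) = star a := (star_inner x y).symm
  -- Expand `0 ≤ ⟪x a - r y, x a - r y⟫` and bound `a* ⟪x, x⟫ a ≤ r a* a`: this leaves
  -- `0 ≤ r • (r ⟪y, y⟫ - a* a)`.
  have hexp : 0 ≤ (inner A (x <• a - r • y) (x <• a - r • y) : A) := inner_self_nonneg
  rw [inner_self_op_smul_sub_smul, ha] at hexp
  have hconj := star_mul_inner_self_mul_le a x
  have h : r • (star a * a) ≤ r • (r • (inner A y y : A)) := by
    rw [← sub_nonneg]
    convert add_nonneg hexp (sub_nonneg.mpr hconj) using 1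
    rw [mul_smul]
    abel
  rw [ha]
  exact (smul_le_smul_iff_of_pos_left hr).mp h

theorem inner_self_sum_op_smul_le_of_pairwise {ι : Type*} (s : Finset ι) {y : ι → E}
    (horth : Pairwise fun i j => (inner A (y i) (y j) : A) = 0) (a : ι → A) {M : ℝ}
    (hM : ∀ i ∈ s, ‖y i‖ ^ 2 ≤ M) :
    (inner A (∑ i ∈ s, y i <• a i) (∑ i ∈ s, y i <• a i) : A) ≤
      M • ∑ i ∈ s, star (a i) * a i := by
  rw [inner_sum_op_smul_self_of_pairwise s horth, Finset.smul_sum]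
  refine Finset.sum_le_sum fun i hi => (star_mul_inner_self_mul_le (a i) (y i)).trans ?_
  exact smul_le_smul_of_nonneg_right (hM i hi) (star_mul_self_nonneg _)

theorem norm_sum_op_smul_sq_le_of_pairwise {ι : Type*} (s : Finset ι) {y : ι → E}
    (horth : Pairwise fun i j => (inner A (y i) (y j) : A) = 0) (a : ι → A) {M : ℝ}
    (hM₀ : 0 ≤ M) (hM : ∀ i ∈ s, ‖y i‖ ^ 2 ≤ M) :
    ‖∑ i ∈ s, y i <• a i‖ ^ 2 ≤ M * ‖∑ i ∈ s, star (a i) * a i‖ := by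
  rw [norm_sq_eq_norm_inner_self (A := A), ← Real.norm_of_nonneg hM₀, ← norm_smul]
  exact CStarAlgebra.norm_le_norm_of_nonneg_of_le inner_self_nonneg
    (inner_self_sum_op_smul_le_of_pairwise s horth a hM)

end CStarAlgebra

end CStarModuleRight

theorem stmt_15 {A E : Type*} [NonUnitalCStarAlgebra A] [PartialOrder A] [StarOrderedRing A]
    [AddCommGroup E] [Module ℂ E] [SMul Aᵐᵒᵖ E] [Norm E] [CStarModuleRight A E]
    {n : ℕ} (hn : 0 < n) (y : Fin n → E)
    (horth : ∀ i j, i ≠ j → (inner A (y i) (y j) : A) = 0) (x : E) :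
    (∑ i, star (inner A (y i) x : A) * (inner A (y i) x : A)) *
        (∑ i, star (inner A (y i) x : A) * (inner A (y i) x : A)) ≤
      ((Finset.univ.sup' ⟨⟨0, hn⟩, Finset.mem_univ _⟩ fun i => ‖y i‖ ^ 2) *
        ‖∑ i, star (inner A (y i) x : A) * (inner A (y i) x : A)‖) • (inner A x x : A) := by
  set a : Fin n → A := fun i => inner A (y i) x
  set S : A := ∑ i, star (a i) * a i
  set M : ℝ := Finset.univ.sup' ⟨⟨0, hn⟩, Finset.mem_univ _⟩ fun i => ‖y i‖ ^ 2
  set z : E := ∑ i, y i <• a i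
  have hzx : (inner A z x : A) = S :=
    (CStarModuleRight.inner_sum_left _ _ _).trans
      (Finset.sum_congr rfl fun _ _ => CStarModuleRight.inner_op_smul_left)
  have hS : IsSelfAdjoint S := .of_nonneg (Finset.sum_nonneg fun i _ => star_mul_self_nonneg _)
  have hM : ∀ i ∈ Finset.univ, ‖y i‖ ^ 2 ≤ M := fun _ hi =>
    Finset.le_sup' (fun i => ‖y i‖ ^ 2) hi
  have hM₀ : 0 ≤ M := (sq_nonneg _).trans (hM _ (Finset.mem_univ ⟨0, hn⟩))
  have hz : ‖z‖ ^ 2 ≤ M * ‖S‖ :=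
    CStarModuleRight.norm_sum_op_smul_sq_le_of_pairwise _ horth a hM₀ hM
  calc S * S = inner A x z * inner A z x := by
        rw [← CStarModuleRight.star_inner, hzx, hS.star_eq]
    _ ≤ ‖z‖ ^ 2 • (inner A x x : A) := CStarModuleRight.inner_mul_inner_swap_le z x
    _ ≤ (M * ‖S‖) • (inner A x x : A) :=
        smul_le_smul_of_nonneg_right hz CStarModuleRight.inner_self_nonneg
end

section
/- Let X be a Hilbert C*-module over a C*-algebra A and y₁,…,yₙ ∈ X, a₁,…,aₙ ∈ A. Then ‖∑ᵢ yᵢaᵢ*‖² ≤ (∑ᵢ ‖aᵢ‖²) · [max_{1≤i≤n} ‖yᵢ‖² + (∑_{i≠j} ‖⟨yᵢ,yⱼ⟩‖²)^{1/2}], as an inequality of real numbers. -/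
open scoped RightActions

/-- The December 2024 Mathlib `CStarModule` (right action `SMul Aᵐᵒᵖ E`), restated verbatim
under a new name, since Mathlib's `CStarModule` now uses a left action `SMul A E`. -/
class CStarModuleOld (A E : Type*) [NonUnitalSemiring A] [StarRing A]
    [Module ℂ A] [AddCommGroup E] [Module ℂ E] [PartialOrder A] [SMul Aᵐᵒᵖ E] [Norm A] [Norm E]
    extends Inner A E where
  inner_add_right {x} {y} {z} : inner x (y + z) = inner x y + inner x z
  inner_self_nonneg {x} : 0 ≤ inner x x
  inner_self {x} : inner x x = 0 ↔ x = 0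
  inner_op_smul_right {a : A} {x y : E} : inner x (y <• a) = inner x y * a
  inner_smul_right_complex {z : ℂ} {x} {y} : inner x (z • y) = z • inner x y
  star_inner x y : star (inner x y) = inner y x
  norm_eq_sqrt_norm_inner_self x : ‖x‖ = √‖inner x x‖

/-! Expanding `⟪∑ yᵢ aᵢ*, ∑ yⱼ aⱼ*⟫ = ∑ᵢⱼ aᵢ ⟪yᵢ, yⱼ⟫ aⱼ*` and estimating termwise reduces the claim
to a scalar inequality in `αᵢ = ‖aᵢ‖` and `γᵢⱼ = ‖⟪yᵢ, yⱼ⟫‖`. The diagonal terms `αᵢ² ‖yᵢ‖²` are at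
most `max ‖yᵢ‖² · ∑ αᵢ²`; for the off-diagonal ones, Cauchy–Schwarz over pairs `i ≠ j` gives
`∑ αᵢ αⱼ γᵢⱼ ≤ (∑ αᵢ² αⱼ²)^{1/2} (∑ γᵢⱼ²)^{1/2} ≤ ∑ αᵢ² · (∑ γᵢⱼ²)^{1/2}`. -/

namespace CStarModuleOld

section Algebra

variable {A E : Type*} [NonUnitalRing A] [StarRing A] [Module ℂ A] [PartialOrder A] [Norm A]
  [AddCommGroup E] [Module ℂ E] [SMul Aᵐᵒᵖ E] [Norm E] [CStarModuleOld A E]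

theorem inner_sum_right {ι : Type*} (s : Finset ι) (x : E) (y : ι → E) :
    inner A x (∑ i ∈ s, y i) = ∑ i ∈ s, inner A x (y i) :=
  map_sum (AddMonoidHom.mk' (inner A x) fun _ _ => inner_add_right) y s

theorem inner_sum_left {ι : Type*} (s : Finset ι) (x : ι → E) (y : E) :
    inner A (∑ i ∈ s, x i) y = ∑ i ∈ s, inner A (x i) y := by
  rw [← star_inner, inner_sum_right, star_sum]
  simp only [star_inner]

theorem inner_op_smul_left (a : A) (x y : E) : inner A (x <• a) y = star a * inner A x y := by
  rw [← star_inner, inner_op_smul_right, star_mul, star_inner]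

theorem inner_sum_op_smul_sum_op_smul {ι : Type*} (s : Finset ι) (x : ι → E) (b c : ι → A) :
    inner A (∑ i ∈ s, x i <• b i) (∑ j ∈ s, x j <• c j) =
      ∑ i ∈ s, ∑ j ∈ s, star (b i) * inner A (x i) (x j) * c j := by
  rw [inner_sum_left]
  refine Finset.sum_congr rfl fun i _ => ?_
  rw [inner_op_smul_left, inner_sum_right, Finset.mul_sum]
  refine Finset.sum_congr rfl fun j _ => ?_
  rw [inner_op_smul_right, mul_assoc]

end Algebra

theorem norm_sq_eq_norm_inner_self {A E : Type*} [NonUnitalSeminormedRing A] [StarRing A]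
    [Module ℂ A] [PartialOrder A] [AddCommGroup E] [Module ℂ E] [SMul Aᵐᵒᵖ E] [Norm E]
    [CStarModuleOld A E] (x : E) : ‖x‖ ^ 2 = ‖inner A x x‖ := by
  rw [norm_eq_sqrt_norm_inner_self (A := A), Real.sq_sqrt (norm_nonneg (inner A x x))]

end CStarModuleOld

theorem norm_sum_sum_mul_mul_star_le {R ι : Type*} [NonUnitalSeminormedRing R] [StarRing R]
    [NormedStarGroup R] (s : Finset ι) (a c : ι → R) (b : ι → ι → R) :
    ‖∑ i ∈ s, ∑ j ∈ s, a i * b i j * star (c j)‖ ≤ ∑ i ∈ s, ∑ j ∈ s, ‖a i‖ * ‖b i j‖ * ‖c j‖ := by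
  refine (norm_sum_le _ _).trans (Finset.sum_le_sum fun i _ => ?_)
  refine (norm_sum_le _ _).trans (Finset.sum_le_sum fun j _ => ?_)
  calc ‖a i * b i j * star (c j)‖ ≤ ‖a i‖ * ‖b i j‖ * ‖star (c j)‖ := norm_mul₃_le
    _ = ‖a i‖ * ‖b i j‖ * ‖c j‖ := by rw [norm_star]

section OffDiagonal

variable {ι : Type*} [Fintype ι] [DecidableEq ι]

theorem Finset.sum_sum_eq_sum_diag_add_sum_offDiag {M : Type*} [AddCommMonoid M]
    (f : ι → ι → M) :
    ∑ i, ∑ j, f i j = ∑ i, f i i + ∑ i, ∑ j, if i = j then 0 else f i j := by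
  rw [← Finset.sum_add_distrib]
  refine Finset.sum_congr rfl fun i _ => ?_
  rw [← Finset.add_sum_erase _ _ (Finset.mem_univ i), Finset.sum_ite, Finset.sum_const_zero,
    zero_add, Finset.filter_ne]

theorem sum_offDiag_mul_mul_le (a : ι → ℝ) (g : ι → ι → ℝ) :
    ∑ i, ∑ j, (if i = j then 0 else a i * g i j * a j) ≤
      (∑ i, a i ^ 2) * √(∑ i, ∑ j, if i = j then 0 else g i j ^ 2) := by
  let g' : ι × ι → ℝ := fun p => if p.1 = p.2 then 0 else g p.1 p.2
  have hsq : ∑ p : ι × ι, (a p.1 * a p.2) ^ 2 = (∑ i, a i ^ 2) ^ 2 := by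
    rw [sq, Finset.sum_mul_sum, Fintype.sum_prod_type]
    simp only [mul_pow]
  calc ∑ i, ∑ j, (if i = j then 0 else a i * g i j * a j)
      = ∑ p : ι × ι, a p.1 * a p.2 * g' p := by
        simp only [g', Fintype.sum_prod_type, mul_ite, mul_zero, mul_right_comm]
    _ ≤ √(∑ p : ι × ι, (a p.1 * a p.2) ^ 2) * √(∑ p, g' p ^ 2) :=
        Real.sum_mul_le_sqrt_mul_sqrt _ _ _
    _ = (∑ i, a i ^ 2) * √(∑ i, ∑ j, if i = j then 0 else g i j ^ 2) := by
        rw [hsq, Real.sqrt_sq (by positivity), Fintype.sum_prod_type]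
        simp only [g', ite_pow, ne_eq, OfNat.ofNat_ne_zero, not_false_eq_true, zero_pow]

theorem sum_sum_mul_mul_le (a : ι → ℝ) (g : ι → ι → ℝ) {M : ℝ} (hM : ∀ i, g i i ≤ M) :
    ∑ i, ∑ j, a i * g i j * a j ≤
      (∑ i, a i ^ 2) * (M + √(∑ i, ∑ j, if i = j then 0 else g i j ^ 2)) := by
  have diag : ∑ i, a i * g i i * a i ≤ (∑ i, a i ^ 2) * M := by
    rw [Finset.sum_mul]
    exact Finset.sum_le_sum fun i _ => by nlinarith [hM i, sq_nonneg (a i)]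
  rw [Finset.sum_sum_eq_sum_diag_add_sum_offDiag, mul_add]
  exact add_le_add diag (sum_offDiag_mul_mul_le a g)

end OffDiagonal

open CStarModuleOld in
theorem stmt_19 {A E : Type*} [NonUnitalCStarAlgebra A] [PartialOrder A] [StarOrderedRing A]
    [AddCommGroup E] [Module ℂ E] [SMul Aᵐᵒᵖ E] [Norm E] [CStarModuleOld A E]
    {n : ℕ} (hn : 0 < n) (y : Fin n → E) (a : Fin n → A) :
    ‖∑ i, (y i <• star (a i))‖ ^ 2 ≤
      (∑ i, ‖a i‖ ^ 2) *
        ((Finset.univ.sup' ⟨⟨0, hn⟩, Finset.mem_univ _⟩ fun i => ‖y i‖ ^ 2) +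
          Real.sqrt (∑ i, ∑ j, if i = j then 0 else ‖(inner A (y i) (y j) : A)‖ ^ 2)) := by
  have hdiag (i : Fin n) : ‖inner A (y i) (y i)‖ ≤
      Finset.univ.sup' ⟨⟨0, hn⟩, Finset.mem_univ _⟩ fun i => ‖y i‖ ^ 2 := by
    rw [← norm_sq_eq_norm_inner_self]
    exact Finset.le_sup' (fun i => ‖y i‖ ^ 2) (Finset.mem_univ i)
  calc ‖∑ i, (y i <• star (a i))‖ ^ 2
      = ‖∑ i, ∑ j, a i * inner A (y i) (y j) * star (a j)‖ := by
        rw [norm_sq_eq_norm_inner_self (A := A), inner_sum_op_smul_sum_op_smul]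
        simp only [star_star]
    _ ≤ ∑ i, ∑ j, ‖a i‖ * ‖inner A (y i) (y j)‖ * ‖a j‖ := norm_sum_sum_mul_mul_star_le _ _ _ _
    _ ≤ _ := sum_sum_mul_mul_le _ _ hdiag
end
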